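/- (Theorem 1, transfer-matrix form.) Fix μ ∈ [0,1] and let O and O' be arbitrary complex 3×3 matrices, indexed by m, m' ∈ {1, 0, −1}. Define the complex 4×4 matrices D_O := Σ_{m,m'} O_{m,m'} · A⁽ᵐ⁾ ⊗ A⁽ᵐ'⁾ and similarly D_{O'}. Then: (i) Tr[T(μ)^L] > 0 for all sufficiently large L; (ii) the single-site limits a := lim_{L→∞} Tr[D_O · T(μ)^{L−1}]/Tr[T(μ)^L] and a' := lim_{L→∞} Tr[D_{O'} · T(μ)^{L−1}]/Tr[T(μ)^L] exist; (iii) for every integer r ≥ 1 the two-point limit G(r) := lim_{L→∞} Tr[D_O · T(μ)^{r−1} · D_{O'} · T(μ)^{L−r−1}]/Tr[T(μ)^L] exists; and (iv) there is a constant C ≥ 0, depending only on O, O', and μ, such that |G(r) − a·a'| ≤ C·(μ/(2·λ₊(μ)))^r for every r ≥ 1. (These trace ratios are the finite-volume expectations ⟨Ô_j Ô'_{j+r}⟩ and ⟨Ô_j⟩ of single-site observables in the S=1 asymmetric VBS state, via its matrix product representation, so the statement asserts the exponential decay of all truncated two-point correlation functions with rate |λ₀/λ₊|.) -/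

import Mathlib

/-!
`T(μ)` is diagonalised by a complete family of orthogonal idempotents: the rank-one projection
`P₊` onto the `λ₊`-eigenvector `(1/2 - λ₋) e₀₀ + μ e₁₁`, the projection `P₀` onto
`span {e₀₁, e₁₀}` (eigenvalue `λ₀ = -μ/2`) and their complement `P₋` (eigenvalue `λ₋`), so that
`T^L = λ₊^L P₊ + λ₋^L P₋ + λ₀^L P₀`. Since `|λ₋|, |λ₀| ≤ μ/2 < λ₊`, the matrices `λ₊^{-L} T^L`
converge to `P₊` and every ratio `Tr[M T^{L-k}] / Tr[T^L]` converges to `Tr[M P₊] / λ₊^k`.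
Because `P₊` has rank one, `Tr[X P₊ Y P₊] = Tr[X P₊] Tr[Y P₊]`, so the `λ₊`-part of `G(r)` is
exactly `a a'` and the rest is `O((μ/2)^{r-1} / λ₊^{r+1})`. At `μ = 0` the factor
`(μ/2)^{r-1}` does not vanish for `r = 1`; there `D_O` is a multiple of `T(0) = λ₊ P₊`, so the
remainder vanishes identically.
-/
open Matrix Kronecker Filter

/-- The matrices `A⁽¹⁾, A⁽⁰⁾, A⁽⁻¹⁾` (indexed by `0, 1, 2`) of the S=1 asymmetric
VBS state, regarded as complex matrices. -/
noncomputable def A (μ : ℝ) : Fin 3 → Matrix (Fin 2) (Fin 2) ℂ :=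
  ![!![0, 0; -(Real.sqrt μ : ℂ), 0],
    (1 / (Real.sqrt 2 : ℂ)) • !![1, 0; 0, -(μ : ℂ)],
    !![0, (Real.sqrt μ : ℂ); 0, 0]]

/-- The transfer matrix `T(μ)` of the S=1 asymmetric VBS state. -/
noncomputable def T (μ : ℝ) : Matrix (Fin 2 × Fin 2) (Fin 2 × Fin 2) ℂ :=
  ∑ m : Fin 3, A μ m ⊗ₖ A μ m

/-- The transfer-matrix insertion `D_O` corresponding to a single-site operator `O`. -/
noncomputable def D (μ : ℝ) (O : Matrix (Fin 3) (Fin 3) ℂ) :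
    Matrix (Fin 2 × Fin 2) (Fin 2 × Fin 2) ℂ :=
  ∑ m : Fin 3, ∑ m' : Fin 3, O m m' • (A μ m ⊗ₖ A μ m')

/-- The eigenvalue `λ₊(μ)`. -/
noncomputable def lamP (μ : ℝ) : ℝ := (μ ^ 2 + 1 + Real.sqrt (μ ^ 4 + 14 * μ ^ 2 + 1)) / 4

open scoped Topology

section Idempotents
variable {R S ι : Type*} [CommSemiring R] [Semiring S] [Algebra R S] [Fintype ι]

theorem CompleteOrthogonalIdempotents.sum_smul_pow {e : ι → S}
    (he : CompleteOrthogonalIdempotents e) (c : ι → R) (n : ℕ) :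
    (∑ i, c i • e i) ^ n = ∑ i, c i ^ n • e i := by
  classical
  induction n with
  | zero => simp [he.complete]
  | succ n ih =>
    simp only [pow_succ, ih, Finset.sum_mul, Finset.mul_sum, smul_mul_smul_comm, he.mul_eq,
      smul_ite, smul_zero, Finset.sum_ite_eq', Finset.mem_univ, if_true]

end Idempotents

theorem CompleteOrthogonalIdempotents.of_isIdempotentElem_of_mul_eq_zero {S : Type*} [Ring S]
    {p q : S} (hp : IsIdempotentElem p) (hq : IsIdempotentElem q) (hpq : p * q = 0)
    (hqp : q * p = 0) :
    CompleteOrthogonalIdempotents ![p, 1 - p - q, q] := by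
  refine CompleteOrthogonalIdempotents.iff_ortho_complete.mpr ⟨?_, ?_⟩
  · intro i j hij
    fin_cases i <;> fin_cases j <;>
      simp_all [mul_sub, sub_mul, hp.eq, hq.eq]
  · simp only [Fin.sum_univ_three, Matrix.cons_val]
    abel

section RankOne
variable {n K : Type*} [Fintype n] [Field K]

namespace Matrix

theorem trace_mul_vecMulVec_mul_mul_vecMulVec {R : Type*} [CommSemiring R] (u v : n → R)
    (X Y : Matrix n n R) :
    (X * vecMulVec u v * Y * vecMulVec u v).trace
      = (X * vecMulVec u v).trace * (Y * vecMulVec u v).trace := by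
  simp only [mul_vecMulVec, trace_vecMulVec, ← mulVec_mulVec, vecMulVec_mulVec, op_smul_eq_smul,
    smul_dotProduct, smul_eq_mul, dotProduct_comm v]
  ring

def rankOneProj (w : n → K) : Matrix n n K := (w ⬝ᵥ w)⁻¹ • vecMulVec w w

variable {w : n → K}

theorem isIdempotentElem_rankOneProj (hw : w ⬝ᵥ w ≠ 0) : IsIdempotentElem (rankOneProj w) := by
  simp [IsIdempotentElem, rankOneProj, vecMulVec_mul_vecMulVec, smul_smul, hw]

theorem trace_rankOneProj (hw : w ⬝ᵥ w ≠ 0) : (rankOneProj w).trace = 1 := by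
  simp [rankOneProj, hw]

theorem trace_mul_rankOneProj_mul_mul_rankOneProj (X Y : Matrix n n K) :
    (X * rankOneProj w * Y * rankOneProj w).trace
      = (X * rankOneProj w).trace * (Y * rankOneProj w).trace := by
  simp only [rankOneProj, Matrix.mul_smul, Matrix.smul_mul, trace_smul, smul_eq_mul,
    trace_mul_vecMulVec_mul_mul_vecMulVec]
  ring

theorem mul_rankOneProj_eq_zero {M : Matrix n n K} (hM : M *ᵥ w = 0) :
    M * rankOneProj w = 0 := by
  simp [rankOneProj, mul_vecMulVec, hM]

theorem rankOneProj_mul_eq_zero {M : Matrix n n K} (hM : w ᵥ* M = 0) :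
    rankOneProj w * M = 0 := by
  simp [rankOneProj, vecMulVec_mul, hM]

end Matrix
end RankOne

section Asymptotics
variable {n K : Type*} [Fintype n] [DecidableEq n] [Field K] [TopologicalSpace K]
  [IsTopologicalDivisionRing K] {T P : Matrix n n K} {a : K}

theorem tendsto_trace_mul_pow_div_pow (hT : Tendsto (fun L => (a ^ L)⁻¹ • T ^ L) atTop (𝓝 P))
    (M : Matrix n n K) :
    Tendsto (fun L => (M * T ^ L).trace / a ^ L) atTop (𝓝 (M * P).trace) := by
  have hcont : Continuous fun X : Matrix n n K => (M * X).trace :=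
    (continuous_const.mul continuous_id).matrix_trace
  refine ((hcont.tendsto P).comp hT).congr fun L => ?_
  rw [Function.comp_apply, Matrix.mul_smul, trace_smul, smul_eq_mul, inv_mul_eq_div]

theorem tendsto_trace_mul_pow_sub_div_trace_pow
    (hT : Tendsto (fun L => (a ^ L)⁻¹ • T ^ L) atTop (𝓝 P)) (ha : a ≠ 0) (hP : P.trace ≠ 0)
    (M : Matrix n n K) (k : ℕ) :
    Tendsto (fun L => (M * T ^ (L - k)).trace / (T ^ L).trace) atTop
      (𝓝 ((M * P).trace / (a ^ k * P.trace))) := by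
  have hnum := (tendsto_trace_mul_pow_div_pow hT M).comp (tendsto_sub_atTop_nat k)
  have hden := (tendsto_trace_mul_pow_div_pow hT 1).const_mul (a ^ k)
  simp only [Matrix.one_mul] at hden
  refine (hnum.div hden (mul_ne_zero (pow_ne_zero k ha) hP)).congr' ?_
  filter_upwards [eventually_ge_atTop k] with L hL
  have hL : a ^ L = a ^ k * a ^ (L - k) := by rw [← pow_add, Nat.add_sub_cancel' hL]
  simp only [Pi.div_apply, Function.comp_apply]
  rw [hL]
  field_simp

end Asymptotics

namespace AsymmetricVBS

variable (μ : ℝ)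

noncomputable def lamM : ℝ := (μ ^ 2 + 1 - Real.sqrt (μ ^ 4 + 14 * μ ^ 2 + 1)) / 4

noncomputable def lam0 : ℝ := -μ / 2

theorem one_add_sq_le_sqrt : μ ^ 2 + 1 ≤ Real.sqrt (μ ^ 4 + 14 * μ ^ 2 + 1) :=
  Real.le_sqrt_of_sq_le (by nlinarith [sq_nonneg μ])

theorem lamP_pos : 0 < lamP μ := by unfold lamP; positivity

theorem lamM_nonpos : lamM μ ≤ 0 := by
  have := one_add_sq_le_sqrt μ
  unfold lamM; linarith

theorem abs_lamM_le {μ : ℝ} (hμ : 0 ≤ μ) : |lamM μ| ≤ μ / 2 := by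
  have : Real.sqrt (μ ^ 4 + 14 * μ ^ 2 + 1) ≤ (μ + 1) ^ 2 :=
    Real.sqrt_le_iff.mpr ⟨by positivity, by nlinarith [mul_nonneg hμ (sq_nonneg (μ - 1))]⟩
  rw [abs_of_nonpos (lamM_nonpos μ)]
  unfold lamM; nlinarith

theorem half_lt_lamP : μ / 2 < lamP μ := by
  have := one_add_sq_le_sqrt μ
  unfold lamP; nlinarith [sq_nonneg (μ - 1)]

theorem abs_lam0 {μ : ℝ} (hμ : 0 ≤ μ) : |lam0 μ| = μ / 2 := by
  rw [lam0, neg_div, abs_neg, abs_of_nonneg (by positivity)]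

theorem lamM_charpoly : (1 / 2 - lamM μ) * (μ ^ 2 / 2 - lamM μ) = μ ^ 2 := by
  have h : Real.sqrt (μ ^ 4 + 14 * μ ^ 2 + 1) ^ 2 = μ ^ 4 + 14 * μ ^ 2 + 1 :=
    Real.sq_sqrt (by positivity)
  unfold lamM; linear_combination h / 16

theorem eigvecPlus_norm_sq :
    (1 / 2 - lamM μ) ^ 2 + μ ^ 2 = (1 / 2 - lamM μ) * (lamP μ - lamM μ) := by
  have h : Real.sqrt (μ ^ 4 + 14 * μ ^ 2 + 1) ^ 2 = μ ^ 4 + 14 * μ ^ 2 + 1 :=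
    Real.sq_sqrt (by positivity)
  unfold lamP lamM; linear_combination -h / 16

noncomputable def eigvecPlus : Fin 2 × Fin 2 → ℂ :=
  fun p => if p.1 = p.2 then ![((1 / 2 - lamM μ : ℝ) : ℂ), (μ : ℂ)] p.1 else 0

def projZero : Matrix (Fin 2 × Fin 2) (Fin 2 × Fin 2) ℂ :=
  diagonal fun p => if p.1 = p.2 then 0 else 1

noncomputable def projPlus : Matrix (Fin 2 × Fin 2) (Fin 2 × Fin 2) ℂ :=
  rankOneProj (eigvecPlus μ)

noncomputable def projMinus : Matrix (Fin 2 × Fin 2) (Fin 2 × Fin 2) ℂ :=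
  1 - projPlus μ - projZero

theorem dotProduct_eigvecPlus :
    eigvecPlus μ ⬝ᵥ eigvecPlus μ = ((1 / 2 - lamM μ) * (lamP μ - lamM μ) : ℝ) := by
  rw [← eigvecPlus_norm_sq]
  simp [eigvecPlus, dotProduct, Fintype.sum_prod_type, sq]

theorem dotProduct_eigvecPlus_ne_zero : eigvecPlus μ ⬝ᵥ eigvecPlus μ ≠ 0 := by
  have := lamM_nonpos μ
  have := lamP_pos μ
  rw [dotProduct_eigvecPlus, Complex.ofReal_ne_zero]
  apply mul_ne_zero <;> linarith

theorem isIdempotentElem_projZero : IsIdempotentElem projZero := by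
  rw [IsIdempotentElem, projZero, diagonal_mul_diagonal]
  congr with p
  split_ifs <;> simp

theorem trace_projZero : projZero.trace = 2 := by
  norm_num [projZero, Fintype.sum_prod_type]

theorem trace_projPlus : (projPlus μ).trace = 1 :=
  trace_rankOneProj (dotProduct_eigvecPlus_ne_zero μ)

theorem isIdempotentElem_projPlus : IsIdempotentElem (projPlus μ) :=
  isIdempotentElem_rankOneProj (dotProduct_eigvecPlus_ne_zero μ)

theorem projPlus_mul_projZero : projPlus μ * projZero = 0 := by
  refine rankOneProj_mul_eq_zero (funext fun p => ?_)
  by_cases h : p.1 = p.2 <;> simp [projZero, eigvecPlus, vecMul_diagonal, h]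

theorem projZero_mul_projPlus : projZero * projPlus μ = 0 := by
  refine mul_rankOneProj_eq_zero (funext fun p => ?_)
  by_cases h : p.1 = p.2 <;> simp [projZero, eigvecPlus, mulVec_diagonal, h]

theorem projPlus_mul_projMinus : projPlus μ * projMinus μ = 0 := by
  rw [projMinus, mul_sub, mul_sub, mul_one, projPlus_mul_projZero,
    (isIdempotentElem_projPlus μ).eq, sub_self, sub_zero]

theorem completeOrthogonalIdempotents_proj :
    CompleteOrthogonalIdempotents ![projPlus μ, projMinus μ, projZero] :=
  .of_isIdempotentElem_of_mul_eq_zero (isIdempotentElem_projPlus μ) isIdempotentElem_projZero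
    (projPlus_mul_projZero μ) (projZero_mul_projPlus μ)

/-- On `span {e₀₁, e₁₀}` the matrix `T(μ)` is `λ₀`; on `span {e₀₀, e₁₁}` it is
`[[1/2, μ], [μ, μ²/2]]`, so there `T(μ) - λ₋` has rank one by `lamM_charpoly`. -/
theorem smul_T_sub_eq_vecMulVec {μ : ℝ} (hμ : 0 ≤ μ) :
    ((1 / 2 - lamM μ : ℝ) : ℂ) •
        (T μ - (lamM μ : ℂ) • 1 - ((lam0 μ - lamM μ : ℝ) : ℂ) • projZero)
      = vecMulVec (eigvecPlus μ) (eigvecPlus μ) := by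
  have h2 : ((Real.sqrt 2 : ℝ) : ℂ) ^ 2 = 2 := by exact_mod_cast Real.sq_sqrt zero_le_two
  have hμ : ((Real.sqrt μ : ℝ) : ℂ) ^ 2 = μ := by exact_mod_cast Real.sq_sqrt hμ
  have key : ((1 / 2 - lamM μ : ℝ) : ℂ) * (μ ^ 2 / 2 - lamM μ) = μ ^ 2 := by
    exact_mod_cast lamM_charpoly μ
  push_cast at key ⊢
  ext ⟨i, j⟩ ⟨k, l⟩
  fin_cases i <;> fin_cases j <;> fin_cases k <;> fin_cases l <;>
    simp [T, A, projZero, eigvecPlus, kroneckerMap_apply, Fin.sum_univ_three, lam0,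
      vecMulVec_apply] <;>
    grind

theorem T_eq_sum {μ : ℝ} (hμ : 0 ≤ μ) :
    T μ = ∑ i, ((![lamP μ, lamM μ, lam0 μ] i : ℝ) : ℂ) •
      ![projPlus μ, projMinus μ, projZero] i := by
  have hal : ((1 / 2 - lamM μ : ℝ) : ℂ) ≠ 0 :=
    Complex.ofReal_ne_zero.mpr (by linarith [lamM_nonpos μ])
  have hdiff : ((lamP μ - lamM μ : ℝ) : ℂ) ≠ 0 :=
    Complex.ofReal_ne_zero.mpr (by linarith [lamM_nonpos μ, lamP_pos μ])
  have hP : ((lamP μ - lamM μ : ℝ) : ℂ) • projPlus μ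
      = T μ - (lamM μ : ℂ) • 1 - ((lam0 μ - lamM μ : ℝ) : ℂ) • projZero := by
    rw [projPlus, rankOneProj, ← smul_T_sub_eq_vecMulVec hμ, dotProduct_eigvecPlus, smul_smul,
      smul_smul]
    refine (congrArg (· • _) ?_).trans (one_smul ℂ _)
    rw [Complex.ofReal_mul]
    grind
  simp only [Fin.sum_univ_three, projMinus, cons_val_zero, cons_val_one, cons_val_two,
    Nat.succ_eq_add_one, Nat.reduceAdd, head_cons, tail_cons]
  push_cast at hP
  linear_combination (norm := module) -hP

theorem T_pow_eq {μ : ℝ} (hμ : 0 ≤ μ) (L : ℕ) :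
    T μ ^ L = ((lamP μ : ℂ) ^ L) • projPlus μ + ((lamM μ : ℂ) ^ L) • projMinus μ
      + ((lam0 μ : ℂ) ^ L) • projZero := by
  rw [T_eq_sum hμ, (completeOrthogonalIdempotents_proj μ).sum_smul_pow, Fin.sum_univ_three]
  rfl

theorem trace_projMinus : (projMinus μ).trace = 1 := by
  rw [projMinus, trace_sub, trace_sub, trace_one, trace_projPlus, trace_projZero]
  norm_num

theorem trace_T_pow {μ : ℝ} (hμ : 0 ≤ μ) (L : ℕ) :
    (T μ ^ L).trace = ((lamP μ ^ L + lamM μ ^ L + 2 * lam0 μ ^ L : ℝ) : ℂ) := by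
  simp only [T_pow_eq hμ, trace_add, trace_smul, trace_projPlus, trace_projMinus, trace_projZero,
    smul_eq_mul]
  push_cast
  ring

theorem tendsto_inv_pow_smul_T_pow {μ : ℝ} (hμ : 0 ≤ μ) :
    Tendsto (fun L => ((lamP μ : ℂ) ^ L)⁻¹ • T μ ^ L) atTop (𝓝 (projPlus μ)) := by
  have hP : (lamP μ : ℂ) ≠ 0 := Complex.ofReal_ne_zero.mpr (lamP_pos μ).ne'
  have hratio {x : ℝ} (hx : |x| ≤ μ / 2) :
      Tendsto (fun L : ℕ => ((x : ℂ) / lamP μ) ^ L) atTop (𝓝 0) := by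
    refine tendsto_pow_atTop_nhds_zero_of_norm_lt_one ?_
    rw [norm_div, Complex.norm_real, Complex.norm_real, Real.norm_eq_abs, Real.norm_eq_abs,
      abs_of_pos (lamP_pos μ), div_lt_one (lamP_pos μ)]
    exact hx.trans_lt (half_lt_lamP μ)
  have h := (((hratio (abs_lamM_le hμ)).smul_const (projMinus μ)).add
    ((hratio (abs_lam0 hμ).le).smul_const projZero)).const_add (projPlus μ)
  rw [zero_smul, zero_smul, add_zero, add_zero] at h
  refine h.congr fun L => ?_
  simp only [T_pow_eq hμ, smul_add, smul_smul, inv_mul_cancel₀ (pow_ne_zero L hP), one_smul,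
    div_pow, inv_mul_eq_div, add_assoc]

theorem eventually_trace_T_pow {μ : ℝ} (hμ : 0 ≤ μ) :
    ∀ᶠ L in atTop, 0 < (T μ ^ L).trace.re ∧ (T μ ^ L).trace.im = 0 := by
  have h := tendsto_trace_mul_pow_div_pow (tendsto_inv_pow_smul_T_pow hμ) 1
  simp only [Matrix.one_mul, trace_projPlus] at h
  filter_upwards [(Complex.continuous_re.tendsto _).comp h |>.eventually_const_lt
    (by simp : (0 : ℝ) < (1 : ℂ).re)] with L hL
  simp only [Function.comp_apply, trace_T_pow hμ, ← Complex.ofReal_pow, ← Complex.ofReal_div,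
    Complex.ofReal_re] at hL
  rw [trace_T_pow hμ, Complex.ofReal_re, Complex.ofReal_im]
  exact ⟨(div_pos_iff_of_pos_right (pow_pos (lamP_pos μ) L)).mp hL, rfl⟩

theorem tendsto_trace_mul_T_pow_sub_div {μ : ℝ} (hμ : 0 ≤ μ)
    (M : Matrix (Fin 2 × Fin 2) (Fin 2 × Fin 2) ℂ) (k : ℕ) :
    Tendsto (fun L => (M * T μ ^ (L - k)).trace / (T μ ^ L).trace) atTop
      (𝓝 ((M * projPlus μ).trace / (lamP μ : ℂ) ^ k)) := by
  simpa [trace_projPlus] using tendsto_trace_mul_pow_sub_div_trace_pow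
    (tendsto_inv_pow_smul_T_pow hμ) (Complex.ofReal_ne_zero.mpr (lamP_pos μ).ne')
    (by simp [trace_projPlus]) M k

theorem trace_mul_T_pow_mul_mul_projPlus {μ : ℝ} (hμ : 0 ≤ μ)
    (X Y : Matrix (Fin 2 × Fin 2) (Fin 2 × Fin 2) ℂ) (m : ℕ) :
    (X * T μ ^ m * Y * projPlus μ).trace
      = (lamP μ : ℂ) ^ m * ((X * projPlus μ).trace * (Y * projPlus μ).trace)
        + (lamM μ : ℂ) ^ m * (X * projMinus μ * Y * projPlus μ).trace
        + (lam0 μ : ℂ) ^ m * (X * projZero * Y * projPlus μ).trace := by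
  simp only [T_pow_eq hμ, Matrix.mul_add, Matrix.add_mul, Matrix.mul_smul, Matrix.smul_mul,
    trace_add, trace_smul, smul_eq_mul, projPlus, trace_mul_rankOneProj_mul_mul_rankOneProj]

noncomputable def expectation (O : Matrix (Fin 3) (Fin 3) ℂ) : ℂ :=
  (D μ O * projPlus μ).trace / lamP μ

noncomputable def correlation (O O' : Matrix (Fin 3) (Fin 3) ℂ) (r : ℕ) : ℂ :=
  (D μ O * T μ ^ (r - 1) * D μ O' * projPlus μ).trace / (lamP μ : ℂ) ^ (r + 1)

theorem tendsto_expectation {μ : ℝ} (hμ : 0 ≤ μ) (O : Matrix (Fin 3) (Fin 3) ℂ) :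
    Tendsto (fun L => (D μ O * T μ ^ (L - 1)).trace / (T μ ^ L).trace) atTop
      (𝓝 (expectation μ O)) := by
  simpa [expectation] using tendsto_trace_mul_T_pow_sub_div hμ (D μ O) 1

theorem tendsto_correlation {μ : ℝ} (hμ : 0 ≤ μ) (O O' : Matrix (Fin 3) (Fin 3) ℂ) (r : ℕ) :
    Tendsto (fun L =>
        (D μ O * T μ ^ (r - 1) * D μ O' * T μ ^ (L - r - 1)).trace / (T μ ^ L).trace)
      atTop (𝓝 (correlation μ O O' r)) := by
  simpa only [Nat.sub_sub, correlation] using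
    tendsto_trace_mul_T_pow_sub_div hμ (D μ O * T μ ^ (r - 1) * D μ O') (r + 1)

theorem correlation_succ_sub_expectation_mul {μ : ℝ} (hμ : 0 ≤ μ)
    (O O' : Matrix (Fin 3) (Fin 3) ℂ) (q : ℕ) :
    correlation μ O O' (q + 1) - expectation μ O * expectation μ O'
      = ((lamM μ : ℂ) ^ q * (D μ O * projMinus μ * D μ O' * projPlus μ).trace
          + (lam0 μ : ℂ) ^ q * (D μ O * projZero * D μ O' * projPlus μ).trace)
        / (lamP μ : ℂ) ^ (q + 2) := by
  have hP : (lamP μ : ℂ) ≠ 0 := Complex.ofReal_ne_zero.mpr (lamP_pos μ).ne'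
  rw [correlation, expectation, expectation, Nat.add_sub_cancel,
    trace_mul_T_pow_mul_mul_projPlus hμ]
  field_simp
  ring

theorem T_zero : T 0 = (lamP 0 : ℂ) • projPlus 0 := by
  simpa [lamM, lam0] using T_pow_eq le_rfl 1

theorem D_zero (O : Matrix (Fin 3) (Fin 3) ℂ) : D 0 O = O 1 1 • T 0 := by
  have h0 : A 0 0 = 0 := by ext i j; fin_cases i <;> fin_cases j <;> simp [A]
  have h2 : A 0 2 = 0 := by ext i j; fin_cases i <;> fin_cases j <;> simp [A]
  simp [D, T, Fin.sum_univ_three, h0, h2]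

theorem exists_norm_correlation_sub_le {μ : ℝ} (hμ : 0 ≤ μ)
    (O O' : Matrix (Fin 3) (Fin 3) ℂ) :
    ∃ C, 0 ≤ C ∧ ∀ r, 1 ≤ r →
      ‖correlation μ O O' r - expectation μ O * expectation μ O'‖
        ≤ C * (μ / (2 * lamP μ)) ^ r := by
  obtain rfl | hμ₀ := hμ.eq_or_lt
  · refine ⟨0, le_rfl, fun r hr => ?_⟩
    obtain ⟨q, rfl⟩ := Nat.exists_eq_add_of_le' hr
    have hM : D 0 O * projMinus 0 = 0 := by
      rw [D_zero, T_zero, smul_mul, smul_mul]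
      simp [projPlus_mul_projMinus]
    have hZ : D 0 O * projZero = 0 := by
      rw [D_zero, T_zero, smul_mul, smul_mul]
      simp [projPlus_mul_projZero]
    simp [correlation_succ_sub_expectation_mul le_rfl, hM, hZ]
  set vM := (D μ O * projMinus μ * D μ O' * projPlus μ).trace
  set vZ := (D μ O * projZero * D μ O' * projPlus μ).trace
  have hP := lamP_pos μ
  refine ⟨2 * (‖vM‖ + ‖vZ‖) / (μ * lamP μ), by positivity, fun r hr => ?_⟩
  obtain ⟨q, rfl⟩ := Nat.exists_eq_add_of_le' hr
  have hnum :
      ‖(lamM μ : ℂ) ^ q * vM + (lam0 μ : ℂ) ^ q * vZ‖ ≤ (μ / 2) ^ q * (‖vM‖ + ‖vZ‖) := by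
    grw [norm_add_le, norm_mul, norm_mul, norm_pow, norm_pow, Complex.norm_real,
      Complex.norm_real, Real.norm_eq_abs, Real.norm_eq_abs, abs_lamM_le hμ, abs_lam0 hμ,
      mul_add]
  rw [correlation_succ_sub_expectation_mul hμ, norm_div, norm_pow, Complex.norm_real,
    Real.norm_of_nonneg hP.le]
  calc _ ≤ (μ / 2) ^ q * (‖vM‖ + ‖vZ‖) / lamP μ ^ (q + 2) := by gcongr
    _ = _ := by rw [div_pow, div_pow, mul_pow]; field_simp; ring

end AsymmetricVBS

open AsymmetricVBS

/-- Theorem 1 in transfer-matrix form: for any single-site observables `O, O'` of the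
S=1 asymmetric VBS state (`μ ∈ [0,1]`): (i) `Tr[T(μ)^L] > 0` for all large `L`;
(ii) the single-site expectations converge; (iii) the two-point expectations converge
for every `r ≥ 1`; (iv) the truncated two-point function decays exponentially with
rate `|λ₀/λ₊| = μ/(2λ₊)`. -/
theorem truncated_correlation_decay_S1 (μ : ℝ) (hμ : μ ∈ Set.Icc (0 : ℝ) 1)
    (O O' : Matrix (Fin 3) (Fin 3) ℂ) :
    (∃ L₀ : ℕ, ∀ L ≥ L₀, 0 < ((T μ ^ L).trace).re ∧ ((T μ ^ L).trace).im = 0) ∧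
    ∃ a a' : ℂ,
      Tendsto (fun L : ℕ => (D μ O * T μ ^ (L - 1)).trace / (T μ ^ L).trace)
        atTop (nhds a) ∧
      Tendsto (fun L : ℕ => (D μ O' * T μ ^ (L - 1)).trace / (T μ ^ L).trace)
        atTop (nhds a') ∧
      ∃ G : ℕ → ℂ,
        (∀ r : ℕ, 1 ≤ r →
          Tendsto (fun L : ℕ =>
              (D μ O * T μ ^ (r - 1) * D μ O' * T μ ^ (L - r - 1)).trace / (T μ ^ L).trace)
            atTop (nhds (G r))) ∧
        ∃ C : ℝ, 0 ≤ C ∧ ∀ r : ℕ, 1 ≤ r →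
          ‖G r - a * a'‖ ≤ C * (μ / (2 * lamP μ)) ^ r := by
  have hμ₀ : 0 ≤ μ := hμ.1
  obtain ⟨C, hC, hdecay⟩ := exists_norm_correlation_sub_le hμ₀ O O'
  exact ⟨eventually_atTop.mp (eventually_trace_T_pow hμ₀), expectation μ O, expectation μ O',
    tendsto_expectation hμ₀ O, tendsto_expectation hμ₀ O', correlation μ O O',
    fun r _ => tendsto_correlation hμ₀ O O' r, C, hC, hdecay⟩
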